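/- arXiv:2506.19226 — 2 statements merged into one kernel-verified Lean document; each statement's English description precedes it below -/
import Mathlib

section
/- Let f: Z_N → C with f̂ supported on E ⊆ Z_N, and let M ⊆ Z_N with |E|·|M| < N/2. If g: Z_N → C satisfies g(x) = f(x) for all x ∉ M and ||ĝ||_{L^1(Z_N)} ≤ ||f̂||_{L^1(Z_N)}, then g = f. -/
/-!
Put `h = g - f`, supported on `M`. As `f̂` vanishes off `E` and `‖ĝ‖₁ ≤ ‖f̂‖₁`, the triangle
inequality forces `ĥ` to carry at least half of its `L¹` mass on `E`. On the other hand
`‖ĥ‖_∞ ≤ ‖h‖₁ ≤ |M| ‖h‖_∞ ≤ |M| ‖ĥ‖₁ / N` (for the unnormalized transform), so the mass of `ĥ`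
on `E` is at most `|E| |M| / N < 1/2` of the total. Hence `ĥ = 0`, i.e. `g = f`.
-/

open Finset

/-- The discrete Fourier transform on `ZMod N`:
`f̂(ω) = N^{-1/2} ∑_x f(x) e^{-2πiωx/N}`. -/
noncomputable def dft {N : ℕ} [NeZero N] (f : ZMod N → ℂ) (ω : ZMod N) : ℂ :=
  (Real.sqrt N : ℂ)⁻¹ *
    ∑ x : ZMod N, f x * Complex.exp (-(2 * Real.pi * Complex.I) * ((ω.val * x.val : ℕ) : ℂ) / (N : ℂ))

/-- `||u||_{L^1(A)} = ∑_{x ∈ A} |u(x)|`. -/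
noncomputable def l1 {N : ℕ} [NeZero N] (A : Finset (ZMod N)) (u : ZMod N → ℂ) : ℝ :=
  ∑ x ∈ A, ‖u x‖

open Function
open scoped ZMod

lemma sum_norm_sub_le_two_mul_of_sum_norm_le {ι E : Type*} [Fintype ι] [SeminormedAddCommGroup E]
    {F G : ι → E} {S : Finset ι} (hF : support F ⊆ S) (hG : ∑ i, ‖G i‖ ≤ ∑ i, ‖F i‖) :
    ∑ i, ‖G i - F i‖ ≤ 2 * ∑ i ∈ S, ‖G i - F i‖ := by
  classical
  have hFS : ∀ i ∉ S, F i = 0 := support_subset_iff'.1 hF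
  have hout : ∑ i ∈ univ \ S, ‖G i - F i‖ = ∑ i ∈ univ \ S, ‖G i‖ :=
    sum_congr rfl fun i hi => by rw [hFS i (mem_sdiff.1 hi).2, sub_zero]
  have hFsum : ∑ i, ‖F i‖ = ∑ i ∈ S, ‖F i‖ :=
    (sum_subset (subset_univ S) fun i _ hi => by rw [hFS i hi, norm_zero]).symm
  have htri : ∑ i ∈ S, ‖F i‖ - ∑ i ∈ S, ‖G i‖ ≤ ∑ i ∈ S, ‖G i - F i‖ := by
    rw [← sum_sub_distrib]
    exact sum_le_sum fun i _ => by
      rw [norm_sub_rev]; linarith [norm_sub_norm_le (F i) (G i)]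
  have hsplitG := sum_sdiff (subset_univ S) (f := fun i => ‖G i‖)
  have hsplit := sum_sdiff (subset_univ S) (f := fun i => ‖G i - F i‖)
  linarith

namespace ZMod

variable {N : ℕ} [NeZero N] {E : Type*} [NormedAddCommGroup E] [NormedSpace ℂ E]

lemma norm_dft_apply_le_sum_norm (Φ : ZMod N → E) (k : ZMod N) : ‖𝓕 Φ k‖ ≤ ∑ j, ‖Φ j‖ := by
  rw [dft_apply]
  refine (norm_sum_le _ _).trans (sum_le_sum fun j _ => ?_)
  rw [norm_smul, stdAddChar_apply, Circle.norm_coe, one_mul]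

lemma norm_apply_le_sum_norm_dft_div (Φ : ZMod N → E) (j : ZMod N) :
    ‖Φ j‖ ≤ (∑ k, ‖𝓕 Φ k‖) / N := by
  have hinv : Φ j = (N : ℂ)⁻¹ • 𝓕 (𝓕 Φ) (-j) := by
    rw [← invDFT_apply', LinearEquiv.symm_apply_apply]
  rw [hinv, norm_smul, norm_inv, Complex.norm_natCast, inv_mul_eq_div]
  gcongr
  exact norm_dft_apply_le_sum_norm _ _

lemma sum_norm_dft_le_of_support_subset {Φ : ZMod N → E} {B : Finset (ZMod N)}
    (hΦ : support Φ ⊆ B) (A : Finset (ZMod N)) :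
    ∑ k ∈ A, ‖𝓕 Φ k‖ ≤ #A * #B / N * ∑ k, ‖𝓕 Φ k‖ := by
  have hΦsum : ∑ j, ‖Φ j‖ = ∑ j ∈ B, ‖Φ j‖ :=
    (sum_subset (subset_univ B) fun j _ hj => by
      rw [support_subset_iff'.1 hΦ j hj, norm_zero]).symm
  have hpoint : ∀ k, ‖𝓕 Φ k‖ ≤ #B * ((∑ k, ‖𝓕 Φ k‖) / N) := fun k =>
    calc ‖𝓕 Φ k‖ ≤ ∑ j ∈ B, ‖Φ j‖ := hΦsum ▸ norm_dft_apply_le_sum_norm Φ k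
      _ ≤ ∑ _j ∈ B, (∑ k, ‖𝓕 Φ k‖) / N :=
          sum_le_sum fun j _ => norm_apply_le_sum_norm_dft_div Φ j
      _ = #B * ((∑ k, ‖𝓕 Φ k‖) / N) := by rw [sum_const, nsmul_eq_mul]
  calc ∑ k ∈ A, ‖𝓕 Φ k‖ ≤ ∑ _k ∈ A, #B * ((∑ k, ‖𝓕 Φ k‖) / N) := sum_le_sum fun k _ => hpoint k
    _ = #A * #B / N * ∑ k, ‖𝓕 Φ k‖ := by rw [sum_const, nsmul_eq_mul]; ring

end ZMod

section Normalization

variable {N : ℕ} [NeZero N]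

lemma dft_eq_inv_sqrt_mul_dft (f : ZMod N → ℂ) (ω : ZMod N) :
    dft f ω = (Real.sqrt N : ℂ)⁻¹ * 𝓕 f ω := by
  rw [dft, ZMod.dft_apply]
  congr 1
  refine sum_congr rfl fun x _ => ?_
  have hchar := ZMod.stdAddChar_coe (N := N) (-(ω.val * x.val : ℤ))
  have harg : ((-(ω.val * x.val : ℤ) : ℤ) : ZMod N) = -(x * ω) := by
    push_cast
    rw [ZMod.natCast_val, ZMod.natCast_val, ZMod.cast_id, ZMod.cast_id]
    ring
  rw [harg] at hchar
  rw [smul_eq_mul, hchar, mul_comm]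
  congr 2
  push_cast
  ring

lemma l1_univ_dft (u : ZMod N → ℂ) :
    l1 univ (dft u) = (Real.sqrt N)⁻¹ * ∑ ω, ‖𝓕 u ω‖ := by
  rw [l1, mul_sum]
  refine sum_congr rfl fun ω _ => ?_
  rw [dft_eq_inv_sqrt_mul_dft, norm_mul, norm_inv, Complex.norm_real, Real.norm_eq_abs,
    abs_of_nonneg (Real.sqrt_nonneg _)]

end Normalization

theorem stmt3 {N : ℕ} [NeZero N] (f g : ZMod N → ℂ) (E M : Finset (ZMod N))
    (hfE : ∀ ω, dft f ω ≠ 0 → ω ∈ E)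
    (hEM : (E.card : ℝ) * M.card < N / 2)
    (hagree : ∀ x ∉ M, g x = f x)
    (hmin : l1 univ (dft g) ≤ l1 univ (dft f)) :
    g = f := by
  have hN : (0 : ℝ) < N := Nat.cast_pos.2 (Nat.pos_of_ne_zero (NeZero.ne N))
  have hM : support (g - f) ⊆ M :=
    support_subset_iff'.2 fun x hx => sub_eq_zero.2 (hagree x hx)
  have hE : support (𝓕 f) ⊆ E := fun ω hω => hfE ω <| by
    rw [dft_eq_inv_sqrt_mul_dft]
    exact mul_ne_zero (by simp [hN.ne']) hω
  have hmin' : ∑ ω, ‖𝓕 g ω‖ ≤ ∑ ω, ‖𝓕 f ω‖ := by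
    rw [l1_univ_dft, l1_univ_dft] at hmin
    exact le_of_mul_le_mul_left hmin (by positivity)
  set S := ∑ ω, ‖𝓕 (g - f) ω‖
  have hS : S ≤ 2 * (#E * #M / N) * S :=
    calc S = ∑ ω, ‖𝓕 g ω - 𝓕 f ω‖ := by simp only [S, map_sub, Pi.sub_apply]
      _ ≤ 2 * ∑ ω ∈ E, ‖𝓕 g ω - 𝓕 f ω‖ := sum_norm_sub_le_two_mul_of_sum_norm_le hE hmin'
      _ = 2 * ∑ ω ∈ E, ‖𝓕 (g - f) ω‖ := by simp only [map_sub, Pi.sub_apply]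
      _ ≤ 2 * (#E * #M / N) * S := by
          rw [mul_assoc]; gcongr; exact ZMod.sum_norm_dft_le_of_support_subset hM E
  have hfrac : 2 * (#E * #M / N : ℝ) < 1 := by
    rw [mul_div_assoc', div_lt_one hN]; linarith
  have hS0 : S = 0 := by nlinarith [sum_nonneg fun ω (_ : ω ∈ univ) => norm_nonneg (𝓕 (g - f) ω)]
  have hdft0 : 𝓕 (g - f) = 0 := funext fun ω =>
    norm_eq_zero.1 ((sum_eq_zero_iff_of_nonneg fun _ _ => norm_nonneg _).1 hS0 ω (mem_univ ω))
  exact sub_eq_zero.1 ((LinearEquiv.map_eq_zero_iff _).1 hdft0)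
end

section
/- (Noisy loose Logan bound) Let f: Z_N → C, M, S ⊆ Z_N, with ||f̂||_{L^1(S^c)} ≤ (ε/N)||f̂||_{L^1(Z_N)}. Set δ = |M||S|/N < 1/2 and δ' = |M^c||S|/N, and let α ≥ 0. Suppose g: Z_N → C satisfies ||f − g||_{L^1(M^c)} ≤ α·||f||_{L^1(M^c)} and ||ĝ||_{L^1(Z_N)} ≤ ||f̂||_{L^1(Z_N)}. Then h = f − g satisfies ||ĥ||_{L^1(Z_N)} ≤ (1/N)·(2ε + 2Nαδ')/(1 − 2δ)·||f̂||_{L^1(Z_N)}. -/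
open Finset

/-! Write `h = f - g` and `H = ‖ĥ‖₁`. Since `‖ĝ‖₁ ≤ ‖f̂‖₁`, whatever mass `ĝ` has on `Sᶜ` it must
give up on `S`, which yields `H ≤ 2‖ĥ‖_{L¹(S)} + 2‖f̂‖_{L¹(Sᶜ)}`. The transform and its inverse are
bounded `L¹ → L^∞` with constant `N^{-1/2}`, so
`‖ĥ‖_{L¹(S)} ≤ |S| N^{-1/2} (‖h‖_{L¹(M)} + ‖h‖_{L¹(Mᶜ)}) ≤ δ H + α δ' ‖f̂‖₁`.
Hence `H ≤ 2δ H + (2ε/N + 2αδ') ‖f̂‖₁`, and `1 - 2δ > 0` lets us solve for `H`. -/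

open scoped ZMod

theorem sum_norm_sub_le_of_sum_norm_le {ι E : Type*} [Fintype ι] [DecidableEq ι]
    [SeminormedAddCommGroup E] (S : Finset ι) {u v : ι → E}
    (h : ∑ i, ‖v i‖ ≤ ∑ i, ‖u i‖) :
    ∑ i, ‖u i - v i‖ ≤ 2 * ∑ i ∈ S, ‖u i - v i‖ + 2 * ∑ i ∈ Sᶜ, ‖u i‖ := by
  have hSc : ∑ i ∈ Sᶜ, ‖u i - v i‖ ≤ ∑ i ∈ Sᶜ, ‖u i‖ + ∑ i ∈ Sᶜ, ‖v i‖ := by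
    rw [← sum_add_distrib]
    exact sum_le_sum fun i _ => norm_sub_le _ _
  have hS : ∑ i ∈ S, ‖u i‖ ≤ ∑ i ∈ S, ‖v i‖ + ∑ i ∈ S, ‖u i - v i‖ := by
    rw [← sum_add_distrib]
    exact sum_le_sum fun i _ => norm_le_norm_add_norm_sub' _ _
  rw [← sum_add_sum_compl S] at h ⊢
  rw [← sum_add_sum_compl S (fun i => ‖u i‖)] at h
  linarith

section

variable {N : ℕ} [NeZero N]

theorem dft_eq_smul_zmodDFT (u : ZMod N → ℂ) : dft u = (Real.sqrt N)⁻¹ • 𝓕 u := by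
  ext ω
  rw [dft, Pi.smul_apply, ZMod.dft_apply, Complex.real_smul, Complex.ofReal_inv]
  congr 1
  refine sum_congr rfl fun x _ => ?_
  have hexp : -(x * ω) = ((-(ω.val * x.val : ℤ) : ℤ) : ZMod N) := by
    push_cast [ZMod.natCast_val, ZMod.intCast_zmod_cast]
    ring
  rw [hexp, ZMod.stdAddChar_apply, ZMod.toCircle_intCast, smul_eq_mul, mul_comm]
  congr 2
  push_cast
  ring

theorem norm_sum_stdAddChar_smul_le (φ : ZMod N → ZMod N) (v : ZMod N → ℂ) :
    ‖∑ j, ZMod.stdAddChar (φ j) • v j‖ ≤ ∑ j, ‖v j‖ :=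
  (norm_sum_le _ _).trans_eq <| sum_congr rfl fun j _ => by
    rw [norm_smul, ZMod.stdAddChar_apply, Circle.norm_coe, one_mul]

theorem norm_dft_le (u : ZMod N → ℂ) (ω : ZMod N) :
    ‖dft u ω‖ ≤ (Real.sqrt N)⁻¹ * l1 univ u := by
  rw [dft_eq_smul_zmodDFT, Pi.smul_apply, norm_smul, Real.norm_of_nonneg (by positivity),
    ZMod.dft_apply]
  gcongr
  exact norm_sum_stdAddChar_smul_le _ u

theorem norm_le_l1_dft (u : ZMod N → ℂ) (x : ZMod N) :
    ‖u x‖ ≤ (Real.sqrt N)⁻¹ * l1 univ (dft u) := by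
  have hsqrt : 0 < Real.sqrt N := Real.sqrt_pos.2 (by simp [Nat.pos_of_ne_zero (NeZero.ne N)])
  have hfourier : 𝓕 u = Real.sqrt N • dft u := by
    rw [dft_eq_smul_zmodDFT, smul_inv_smul₀ hsqrt.ne']
  calc ‖u x‖ = ‖𝓕⁻ (𝓕 u) x‖ := by rw [LinearEquiv.symm_apply_apply]
    _ = (N : ℝ)⁻¹ * ‖∑ j, ZMod.stdAddChar (j * x) • 𝓕 u j‖ := by
      rw [ZMod.invDFT_apply, norm_smul, norm_inv, Complex.norm_natCast]
    _ ≤ (N : ℝ)⁻¹ * ∑ j, ‖𝓕 u j‖ := by gcongr; exact norm_sum_stdAddChar_smul_le _ _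
    _ = (Real.sqrt N)⁻¹ * l1 univ (dft u) := by
      simp only [hfourier, Pi.smul_apply, norm_smul, Real.norm_of_nonneg hsqrt.le, ← mul_sum, l1]
      rw [← mul_assoc, inv_mul_eq_div, Real.sqrt_div_self', one_div]

theorem l1_le_card_mul {A : Finset (ZMod N)} {u : ZMod N → ℂ} {c : ℝ}
    (h : ∀ x ∈ A, ‖u x‖ ≤ c) : l1 A u ≤ A.card * c := by
  simpa [l1] using sum_le_card_nsmul A (fun x => ‖u x‖) c h

theorem dft_sub (f g : ZMod N → ℂ) : dft (f - g) = dft f - dft g := by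
  simp only [dft_eq_smul_zmodDFT, map_sub, smul_sub]

theorem card_div_sqrt_mul_l1_le (S A : Finset (ZMod N)) (u : ZMod N → ℂ) :
    S.card / Real.sqrt N * l1 A u ≤ A.card * S.card / N * l1 univ (dft u) := by
  have hN : Real.sqrt N * Real.sqrt N = N := Real.mul_self_sqrt (Nat.cast_nonneg N)
  calc S.card / Real.sqrt N * l1 A u
      ≤ S.card / Real.sqrt N * (A.card * ((Real.sqrt N)⁻¹ * l1 univ (dft u))) := by
        gcongr
        exact l1_le_card_mul fun x _ => norm_le_l1_dft u x
    _ = A.card * S.card / (Real.sqrt N * Real.sqrt N) * l1 univ (dft u) := by ring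
    _ = A.card * S.card / N * l1 univ (dft u) := by rw [hN]

theorem l1_dft_le (S M : Finset (ZMod N)) (u : ZMod N → ℂ) :
    l1 S (dft u) ≤ M.card * S.card / N * l1 univ (dft u) + S.card / Real.sqrt N * l1 Mᶜ u :=
  calc l1 S (dft u) ≤ S.card * ((Real.sqrt N)⁻¹ * l1 univ u) :=
        l1_le_card_mul fun ω _ => norm_dft_le u ω
    _ = S.card / Real.sqrt N * l1 M u + S.card / Real.sqrt N * l1 Mᶜ u := by
        rw [l1, ← sum_add_sum_compl M, l1, l1]
        ring
    _ ≤ _ := by grw [card_div_sqrt_mul_l1_le]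

end

theorem stmt7_general {N : ℕ} [NeZero N] (f g : ZMod N → ℂ) (M S : Finset (ZMod N))
    (ε α : ℝ) (hα : 0 ≤ α)
    (hconc : l1 Sᶜ (dft f) ≤ ε / N * l1 univ (dft f))
    (hδ : (M.card : ℝ) * S.card / N < 1 / 2)
    (hnoise : l1 Mᶜ (f - g) ≤ α * l1 Mᶜ f)
    (hmin : l1 univ (dft g) ≤ l1 univ (dft f)) :
    l1 univ (dft (f - g)) ≤
      (1 / N) * (2 * ε + 2 * N * α * ((Mᶜ.card : ℝ) * S.card / N)) /
        (1 - 2 * ((M.card : ℝ) * S.card / N)) * l1 univ (dft f) := by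
  have hlogan : l1 univ (dft (f - g)) ≤ 2 * l1 S (dft (f - g)) + 2 * l1 Sᶜ (dft f) := by
    rw [dft_sub]
    exact sum_norm_sub_le_of_sum_norm_le S hmin
  have hnoise_dft : S.card / Real.sqrt N * l1 Mᶜ (f - g) ≤
      α * ((Mᶜ.card : ℝ) * S.card / N * l1 univ (dft f)) := by
    grw [hnoise, mul_left_comm, card_div_sqrt_mul_l1_le]
  have hlocal := l1_dft_le S M (f - g)
  have hN : (N : ℝ) ≠ 0 := Nat.cast_ne_zero.2 (NeZero.ne N)
  have hconst : 1 / (N : ℝ) * (2 * ε + 2 * N * α * ((Mᶜ.card : ℝ) * S.card / N)) =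
      2 * (ε / N) + 2 * (α * ((Mᶜ.card : ℝ) * S.card / N)) := by
    field_simp
  rw [div_mul_eq_mul_div, le_div_iff₀ (by linarith), hconst]
  linarith

/-- Noisy loose Logan bound. -/
theorem stmt7 {N : ℕ} [NeZero N] (f g : ZMod N → ℂ) (M S : Finset (ZMod N))
    (ε α : ℝ) (hε : 0 ≤ ε) (hα : 0 ≤ α)
    (hconc : l1 Sᶜ (dft f) ≤ ε / N * l1 univ (dft f))
    (hδ : (M.card : ℝ) * S.card / N < 1 / 2)
    (hnoise : l1 Mᶜ (f - g) ≤ α * l1 Mᶜ f)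
    (hmin : l1 univ (dft g) ≤ l1 univ (dft f)) :
    l1 univ (dft (f - g)) ≤
      (1 / N) * (2 * ε + 2 * N * α * ((Mᶜ.card : ℝ) * S.card / N)) /
        (1 - 2 * ((M.card : ℝ) * S.card / N)) * l1 univ (dft f) :=
  stmt7_general f g M S ε α hα hconc hδ hnoise hmin
end
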